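/- Let n1, n2 be positive integers, let J : ℝ^{n1×n2} × ℝ^{n1} → ℝ be lower semicontinuous and bounded on bounded sets, let μ2^d ∈ ℝ^{n2} with μ2^d ≥ 0 componentwise, and let c_d ∈ ℝ^{n1×n2}. Let (γ_k)_{k∈ℕ} be positive reals with γ_k → 0, and for each k let (π_k, μ_{1,k}, c_k) minimize (π, μ1, c) ↦ J(π, μ1) + (1/(2γ_k))‖c − c_d‖_F² over the regularized bilevel feasible set F_{γ_k}(μ2^d). Then there exist a subsequence and a point (π̄, μ̄1) ∈ ℝ^{n1×n2} × ℝ^{n1} such that along this subsequence (π_k, μ_{1,k}, c_k) → (π̄, μ̄1, c_d), and moreover μ̄1 ≥ 0 componentwise, Σ_i (μ̄1)_i = Σ_j (μ2^d)_j, and π̄ solves the Hitchcock problem (H) w.r.t. μ̄1, μ2^d, c_d. -/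

import Mathlib

/-
Comparing each minimizer with the competitor `(θ, μ_{1,0}, c_d)`, where `θ` solves the regularized
problem for the fixed marginal `μ_{1,0}`, bounds the penalty `‖c_k - c_d‖² / (2γ_k)` by a constant
(`J` is bounded above on bounded sets and below on compact ones), so `c_k → c_d`. Plans and
marginals stay in the ball of radius `∑ μ2^d`, so a subsequence converges. The limit plan solves
(H): a competitor `θ ∈ Π(μ̄1, μ2^d)` is shrunk to `a θ` with `a < 1` and the missing row mass is
added as a product plan; for large `k` this lies in `Π(μ_{1,k}, μ2^d)`, so the regularized
optimality inequalities pass to the limit, and then `a → 1`.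
-/

open Filter Topology

noncomputable section

/-- The transport polytope Π(μ1, μ2). -/
def transportPolytope {n1 n2 : ℕ} (μ1 : Fin n1 → ℝ) (μ2 : Fin n2 → ℝ) :
    Set (Fin n1 → Fin n2 → ℝ) :=
  {π | (∀ i j, 0 ≤ π i j) ∧ (∀ i, (∑ j, π i j) = μ1 i) ∧ (∀ j, (∑ i, π i j) = μ2 j)}

/-- The Frobenius inner product ⟨c, π⟩_F.  Note that `frob π π = ‖π‖_F²`. -/
def frob {n1 n2 : ℕ} (c π : Fin n1 → Fin n2 → ℝ) : ℝ := ∑ i, ∑ j, c i j * π i j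

/-- π solves the Hitchcock problem (H) w.r.t. μ1, μ2, c. -/
def SolvesH {n1 n2 : ℕ} (μ1 : Fin n1 → ℝ) (μ2 : Fin n2 → ℝ)
    (c π : Fin n1 → Fin n2 → ℝ) : Prop :=
  π ∈ transportPolytope μ1 μ2 ∧
    ∀ θ ∈ transportPolytope μ1 μ2, frob c π ≤ frob c θ

/-- π solves the regularized Hitchcock problem (H_γ) w.r.t. μ1, μ2, c. -/
def SolvesHreg {n1 n2 : ℕ} (γ : ℝ) (μ1 : Fin n1 → ℝ) (μ2 : Fin n2 → ℝ)
    (c π : Fin n1 → Fin n2 → ℝ) : Prop :=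
  π ∈ transportPolytope μ1 μ2 ∧
    ∀ θ ∈ transportPolytope μ1 μ2,
      frob c π + γ / 2 * frob π π ≤ frob c θ + γ / 2 * frob θ θ

/-- The regularized bilevel feasible set F_γ(μ2^d). -/
def regBilevelFeas {n1 n2 : ℕ} (γ : ℝ) (μ2d : Fin n2 → ℝ) :
    Set ((Fin n1 → Fin n2 → ℝ) × (Fin n1 → ℝ) × (Fin n1 → Fin n2 → ℝ)) :=
  {p | (∀ i, 0 ≤ p.2.1 i) ∧ ((∑ i, p.2.1 i) = ∑ j, μ2d j) ∧
    SolvesHreg γ p.2.1 μ2d p.2.2 p.1}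

/-- J is bounded on bounded sets. -/
def BddOnBddSets {n1 n2 : ℕ} (J : (Fin n1 → Fin n2 → ℝ) × (Fin n1 → ℝ) → ℝ) : Prop :=
  ∀ M : ℝ, 0 < M → ∃ B : ℝ, ∀ p : (Fin n1 → Fin n2 → ℝ) × (Fin n1 → ℝ), ‖p‖ ≤ M → J p ≤ B

section TransportPolytope

variable {n1 n2 : ℕ} {μ1 : Fin n1 → ℝ} {μ2 : Fin n2 → ℝ} {π : Fin n1 → Fin n2 → ℝ}

lemma entry_le_of_mem_transportPolytope (hπ : π ∈ transportPolytope μ1 μ2) (i : Fin n1)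
    (j : Fin n2) : π i j ≤ μ2 j :=
  hπ.2.2 j ▸ Finset.single_le_sum (fun i' _ => hπ.1 i' j) (Finset.mem_univ i)

lemma nonneg_right_of_mem_transportPolytope (hπ : π ∈ transportPolytope μ1 μ2) (j : Fin n2) :
    0 ≤ μ2 j :=
  hπ.2.2 j ▸ Finset.sum_nonneg fun i _ => hπ.1 i j

lemma nonneg_left_of_mem_transportPolytope (hπ : π ∈ transportPolytope μ1 μ2) (i : Fin n1) :
    0 ≤ μ1 i :=
  hπ.2.1 i ▸ Finset.sum_nonneg fun j _ => hπ.1 i j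

lemma sum_left_eq_sum_right_of_mem_transportPolytope (hπ : π ∈ transportPolytope μ1 μ2) :
    ∑ i, μ1 i = ∑ j, μ2 j := by
  simp only [← hπ.2.1, ← hπ.2.2]
  exact Finset.sum_comm

lemma norm_le_of_mem_transportPolytope (hπ : π ∈ transportPolytope μ1 μ2) :
    ‖(π, μ1)‖ ≤ ∑ j, μ2 j := by
  have hμ2 := nonneg_right_of_mem_transportPolytope hπ
  have hS : 0 ≤ ∑ j, μ2 j := Finset.sum_nonneg fun j _ => hμ2 j
  refine norm_prod_le_iff.2 ⟨(pi_norm_le_iff_of_nonneg hS).2 fun i =>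
    (pi_norm_le_iff_of_nonneg hS).2 fun j => ?_, (pi_norm_le_iff_of_nonneg hS).2 fun i => ?_⟩
  · rw [Real.norm_of_nonneg (hπ.1 i j)]
    exact (entry_le_of_mem_transportPolytope hπ i j).trans
      (Finset.single_le_sum (fun j _ => hμ2 j) (Finset.mem_univ j))
  · rw [Real.norm_of_nonneg (nonneg_left_of_mem_transportPolytope hπ i), ← hπ.2.1 i]
    exact Finset.sum_le_sum fun j _ => entry_le_of_mem_transportPolytope hπ i j

lemma eq_zero_of_mem_transportPolytope_of_sum_eq_zero (hπ : π ∈ transportPolytope μ1 μ2)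
    (hS : ∑ j, μ2 j = 0) : π = 0 := by
  have hμ2 := (Finset.sum_eq_zero_iff_of_nonneg fun j _ =>
    nonneg_right_of_mem_transportPolytope hπ j).1 hS
  ext i j
  exact le_antisymm
    ((entry_le_of_mem_transportPolytope hπ i j).trans_eq (hμ2 j (Finset.mem_univ j))) (hπ.1 i j)

variable (μ1 μ2)

lemma isClosed_setOf_mem_transportPolytope :
    IsClosed {p : (Fin n1 → Fin n2 → ℝ) × (Fin n1 → ℝ) | p.1 ∈ transportPolytope p.2 μ2} := by
  change IsClosed ({p : (Fin n1 → Fin n2 → ℝ) × (Fin n1 → ℝ) | ∀ i j, 0 ≤ p.1 i j} ∩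
    ({p | ∀ i, ∑ j, p.1 i j = p.2 i} ∩ {p | ∀ j, ∑ i, p.1 i j = μ2 j}))
  simp only [Set.ofPred_forall]
  exact (isClosed_iInter fun i => isClosed_iInter fun j =>
      isClosed_le continuous_const (by fun_prop)).inter
    ((isClosed_iInter fun i => isClosed_eq (by fun_prop) (by fun_prop)).inter
      (isClosed_iInter fun j => isClosed_eq (by fun_prop) continuous_const))

lemma isCompact_transportPolytope : IsCompact (transportPolytope μ1 μ2) :=
  Metric.isCompact_of_isClosed_isBounded
    ((isClosed_setOf_mem_transportPolytope μ2).preimage (continuous_id.prodMk continuous_const))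
    (isBounded_iff_forall_norm_le.2 ⟨∑ j, μ2 j, fun _ hπ =>
      (norm_fst_le _).trans (norm_le_of_mem_transportPolytope hπ)⟩)

end TransportPolytope

section Frobenius

variable {n1 n2 : ℕ}

lemma continuous_frob :
    Continuous fun p : (Fin n1 → Fin n2 → ℝ) × (Fin n1 → Fin n2 → ℝ) => frob p.1 p.2 := by
  unfold frob
  fun_prop

lemma Filter.Tendsto.frob {ι : Type*} {l : Filter ι} {f g : ι → Fin n1 → Fin n2 → ℝ}
    {a b : Fin n1 → Fin n2 → ℝ} (hf : Tendsto f l (𝓝 a)) (hg : Tendsto g l (𝓝 b)) :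
    Tendsto (fun k => _root_.frob (f k) (g k)) l (𝓝 (_root_.frob a b)) := by
  have h := (continuous_frob.tendsto (a, b)).comp (hf.prodMk_nhds hg)
  exact h

lemma frob_self_nonneg (a : Fin n1 → Fin n2 → ℝ) : 0 ≤ frob a a :=
  Finset.sum_nonneg fun _ _ => Finset.sum_nonneg fun _ _ => mul_self_nonneg _

lemma norm_le_sqrt_frob_self (a : Fin n1 → Fin n2 → ℝ) : ‖a‖ ≤ √(frob a a) := by
  refine (pi_norm_le_iff_of_nonneg (Real.sqrt_nonneg _)).2 fun i =>
    (pi_norm_le_iff_of_nonneg (Real.sqrt_nonneg _)).2 fun j => ?_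
  rw [Real.norm_eq_abs]
  refine Real.abs_le_sqrt ?_
  calc a i j ^ 2 = a i j * a i j := sq _
    _ ≤ ∑ j', a i j' * a i j' :=
      Finset.single_le_sum (f := fun j' => a i j' * a i j') (fun _ _ => mul_self_nonneg _)
        (Finset.mem_univ j)
    _ ≤ frob a a :=
      Finset.single_le_sum (f := fun i' => ∑ j', a i' j' * a i' j')
        (fun _ _ => Finset.sum_nonneg fun _ _ => mul_self_nonneg _) (Finset.mem_univ i)

lemma tendsto_of_frob_sub_tendsto_zero {ι : Type*} {l : Filter ι} {f : ι → Fin n1 → Fin n2 → ℝ}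
    {a : Fin n1 → Fin n2 → ℝ} (h : Tendsto (fun k => frob (f k - a) (f k - a)) l (𝓝 0)) :
    Tendsto f l (𝓝 a) :=
  tendsto_iff_norm_sub_tendsto_zero.2 <|
    squeeze_zero (fun _ => norm_nonneg _) (fun k => norm_le_sqrt_frob_self _)
      (by simpa using h.sqrt)

end Frobenius

section Stability

variable {n1 n2 : ℕ} {μ2 : Fin n2 → ℝ}

lemma solvesH_of_sum_eq_zero {μ1 : Fin n1 → ℝ} {c π : Fin n1 → Fin n2 → ℝ}
    (hπ : π ∈ transportPolytope μ1 μ2) (hS : ∑ j, μ2 j = 0) : SolvesH μ1 μ2 c π :=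
  ⟨hπ, fun θ hθ => by
    rw [eq_zero_of_mem_transportPolytope_of_sum_eq_zero hπ hS,
      eq_zero_of_mem_transportPolytope_of_sum_eq_zero hθ hS]⟩

lemma exists_solvesHreg {μ1 : Fin n1 → ℝ} (γ : ℝ) (c : Fin n1 → Fin n2 → ℝ)
    (hne : (transportPolytope μ1 μ2).Nonempty) : ∃ π, SolvesHreg γ μ1 μ2 c π := by
  obtain ⟨π, hπ, hmin⟩ := (isCompact_transportPolytope μ1 μ2).exists_isMinOn hne
    (by unfold frob; fun_prop : Continuous fun θ => frob c θ + γ / 2 * frob θ θ).continuousOn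
  exact ⟨π, hπ, fun θ hθ => hmin hθ⟩

/-- `a • θ` has marginals `a • ν` and `a • μ2`; the product plan adds the missing row mass
`μ - a • ν`, distributed over the columns in proportion to `μ2`. -/
def rowMarginalShift (a : ℝ) (θ : Fin n1 → Fin n2 → ℝ) (ν μ : Fin n1 → ℝ) (μ2 : Fin n2 → ℝ) :
    Fin n1 → Fin n2 → ℝ :=
  fun i j => a * θ i j + (μ i - a * ν i) * μ2 j / ∑ j', μ2 j'

lemma rowMarginalShift_one_self (θ : Fin n1 → Fin n2 → ℝ) (ν : Fin n1 → ℝ) :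
    rowMarginalShift 1 θ ν ν μ2 = θ := by
  ext i j
  simp [rowMarginalShift]

lemma rowMarginalShift_mem_transportPolytope {a : ℝ} {θ : Fin n1 → Fin n2 → ℝ}
    {ν μ : Fin n1 → ℝ} (hθ : θ ∈ transportPolytope ν μ2) (ha : 0 ≤ a)
    (hμ : ∀ i, a * ν i ≤ μ i) (hμsum : ∑ i, μ i = ∑ j, μ2 j) (hS : ∑ j, μ2 j ≠ 0) :
    rowMarginalShift a θ ν μ μ2 ∈ transportPolytope μ μ2 := by
  have hμ2 := nonneg_right_of_mem_transportPolytope hθ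
  have hνsum := sum_left_eq_sum_right_of_mem_transportPolytope hθ
  refine ⟨fun i j => ?_, fun i => ?_, fun j => ?_⟩
  · exact add_nonneg (mul_nonneg ha (hθ.1 i j)) (div_nonneg
      (mul_nonneg (sub_nonneg.2 (hμ i)) (hμ2 j)) (Finset.sum_nonneg fun j _ => hμ2 j))
  · simp only [rowMarginalShift, Finset.sum_add_distrib, ← Finset.mul_sum, ← Finset.sum_div,
      hθ.2.1 i]
    field_simp
    ring
  · simp only [rowMarginalShift, Finset.sum_add_distrib, ← Finset.mul_sum, ← Finset.sum_div,
      ← Finset.sum_mul, Finset.sum_sub_distrib, hθ.2.2 j, hμsum, hνsum]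
    field_simp
    ring

lemma eventually_mul_le_of_tendsto {ι : Type*} {l : Filter ι} {x : ι → ℝ} {y a : ℝ}
    (hx : Tendsto x l (𝓝 y)) (hx0 : ∀ k, 0 ≤ x k) (ha0 : 0 ≤ a) (ha1 : a < 1) :
    ∀ᶠ k in l, a * y ≤ x k := by
  rcases le_or_gt y 0 with hy | hy
  · exact Eventually.of_forall fun k => (mul_nonpos_of_nonneg_of_nonpos ha0 hy).trans (hx0 k)
  · exact (hx.eventually_const_lt (by nlinarith)).mono fun k hk => hk.le

variable {ι : Type*} {l : Filter ι} {γ : ι → ℝ} {μ : ι → Fin n1 → ℝ}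
  {c π : ι → Fin n1 → Fin n2 → ℝ} {c₀ π₀ : Fin n1 → Fin n2 → ℝ}

lemma frob_le_of_tendsto_solvesHreg [l.NeBot] {θ : ι → Fin n1 → Fin n2 → ℝ}
    {θ₀ : Fin n1 → Fin n2 → ℝ} (hsol : ∀ k, SolvesHreg (γ k) (μ k) μ2 (c k) (π k))
    (hγ : Tendsto γ l (𝓝 0)) (hc : Tendsto c l (𝓝 c₀)) (hπ : Tendsto π l (𝓝 π₀))
    (hθ : Tendsto θ l (𝓝 θ₀)) (hθmem : ∀ᶠ k in l, θ k ∈ transportPolytope (μ k) μ2) :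
    frob c₀ π₀ ≤ frob c₀ θ₀ := by
  have hobj : ∀ {ρ : ι → Fin n1 → Fin n2 → ℝ} {ρ₀}, Tendsto ρ l (𝓝 ρ₀) →
      Tendsto (fun k => frob (c k) (ρ k) + γ k / 2 * frob (ρ k) (ρ k)) l (𝓝 (frob c₀ ρ₀)) :=
    fun hρ => by simpa using (hc.frob hρ).add ((hγ.div_const 2).mul (hρ.frob hρ))
  exact le_of_tendsto_of_tendsto (hobj hπ) (hobj hθ) (hθmem.mono fun k hk => (hsol k).2 _ hk)

theorem solvesH_of_tendsto_solvesHreg [l.NeBot] {μ₀ : Fin n1 → ℝ}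
    (hsol : ∀ k, SolvesHreg (γ k) (μ k) μ2 (c k) (π k)) (hγ : Tendsto γ l (𝓝 0))
    (hμ : Tendsto μ l (𝓝 μ₀)) (hc : Tendsto c l (𝓝 c₀)) (hπ : Tendsto π l (𝓝 π₀)) :
    SolvesH μ₀ μ2 c₀ π₀ := by
  have hmem : π₀ ∈ transportPolytope μ₀ μ2 :=
    (isClosed_setOf_mem_transportPolytope μ2).mem_of_tendsto (hπ.prodMk_nhds hμ)
      (Eventually.of_forall fun k => (hsol k).1)
  rcases eq_or_ne (∑ j, μ2 j) 0 with hS | hS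
  · exact solvesH_of_sum_eq_zero hmem hS
  refine ⟨hmem, fun θ hθ => ?_⟩
  have hshift : ∀ a ∈ Set.Ioo (0 : ℝ) 1, frob c₀ π₀ ≤ frob c₀ (rowMarginalShift a θ μ₀ μ₀ μ2) :=
    fun a ha => frob_le_of_tendsto_solvesHreg hsol hγ hc hπ
      (((by unfold rowMarginalShift; fun_prop : Continuous fun ν => rowMarginalShift a θ μ₀ ν μ2
        ).tendsto μ₀).comp hμ) <| by
      filter_upwards [eventually_all.2 fun i => eventually_mul_le_of_tendsto
        (tendsto_pi_nhds.1 hμ i) (fun k => nonneg_left_of_mem_transportPolytope (hsol k).1 i)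
        ha.1.le ha.2] with k hk
      exact rowMarginalShift_mem_transportPolytope hθ ha.1.le hk
        (sum_left_eq_sum_right_of_mem_transportPolytope (hsol k).1) hS
  have hlim : Tendsto (fun a => frob c₀ (rowMarginalShift a θ μ₀ μ₀ μ2)) (𝓝[<] 1)
      (𝓝 (frob c₀ (rowMarginalShift 1 θ μ₀ μ₀ μ2))) :=
    tendsto_const_nhds.frob <| ((by unfold rowMarginalShift; fun_prop : Continuous fun a =>
      rowMarginalShift a θ μ₀ μ₀ μ2).tendsto 1).mono_left nhdsWithin_le_nhds
  rw [rowMarginalShift_one_self] at hlim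
  exact ge_of_tendsto hlim (eventually_of_mem (Ioo_mem_nhdsLT zero_lt_one) hshift)

end Stability

lemma tendsto_zero_of_add_one_div_mul_le {ι : Type*} {l : Filter ι} {γ x y : ι → ℝ} {m B : ℝ}
    (hγ : ∀ k, 0 < γ k) (hγ0 : Tendsto γ l (𝓝 0)) (hx : ∀ k, 0 ≤ x k) (hy : ∀ k, m ≤ y k)
    (h : ∀ k, y k + 1 / (2 * γ k) * x k ≤ B) : Tendsto x l (𝓝 0) := by
  have hle : ∀ k, x k ≤ 2 * γ k * (B - m) := fun k => by
    have hk := h k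
    rw [one_div_mul_eq_div] at hk
    rw [← div_le_iff₀' (by linarith [hγ k])]
    linarith [hy k]
  exact squeeze_zero hx hle (by simpa using (hγ0.const_mul 2).mul_const (B - m))

theorem regularized_solutions_cluster_point_feasible_general (n1 n2 : ℕ)
    (J : (Fin n1 → Fin n2 → ℝ) × (Fin n1 → ℝ) → ℝ)
    (hJ : LowerSemicontinuous J) (hJbdd : BddOnBddSets J)
    (μ2d : Fin n2 → ℝ) (cd : Fin n1 → Fin n2 → ℝ)
    (γs : ℕ → ℝ) (hγpos : ∀ k, 0 < γs k) (hγ0 : Tendsto γs atTop (𝓝 0))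
    (πs : ℕ → Fin n1 → Fin n2 → ℝ) (μs : ℕ → Fin n1 → ℝ) (cs : ℕ → Fin n1 → Fin n2 → ℝ)
    (hfeas : ∀ k, (πs k, μs k, cs k) ∈ regBilevelFeas (γs k) μ2d)
    (hmin : ∀ k, ∀ q ∈ regBilevelFeas (n1 := n1) (γs k) μ2d,
      J (πs k, μs k) + 1 / (2 * γs k) * frob (cs k - cd) (cs k - cd) ≤
        J (q.1, q.2.1) + 1 / (2 * γs k) * frob (q.2.2 - cd) (q.2.2 - cd)) :
    ∃ (φ : ℕ → ℕ) (πb : Fin n1 → Fin n2 → ℝ) (μb : Fin n1 → ℝ),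
      StrictMono φ ∧
      Tendsto (fun k => (πs (φ k), μs (φ k), cs (φ k))) atTop (𝓝 (πb, μb, cd)) ∧
      (∀ i, 0 ≤ μb i) ∧ ((∑ i, μb i) = ∑ j, μ2d j) ∧ SolvesH μb μ2d cd πb := by
  set S := ∑ j, μ2d j
  have hbound : ∀ k, ‖(πs k, μs k)‖ ≤ S :=
    fun k => norm_le_of_mem_transportPolytope (hfeas k).2.2.1
  -- `(θ k, μs 0, cd)` is feasible at level `γs k` and pays no penalty.
  choose θ hθ using fun k => exists_solvesHreg (γs k) cd ⟨πs 0, (hfeas 0).2.2.1⟩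
  obtain ⟨B, hB⟩ := hJbdd (S + 1) (by linarith [(norm_nonneg _).trans (hbound 0)])
  obtain ⟨m, hm⟩ := (hJ.lowerSemicontinuousOn _).bddBelow_of_isCompact
    (isCompact_closedBall (0 : (Fin n1 → Fin n2 → ℝ) × (Fin n1 → ℝ)) S)
  have hpenalty : ∀ k, J (πs k, μs k) + 1 / (2 * γs k) * frob (cs k - cd) (cs k - cd) ≤ B :=
    fun k => (hmin k (θ k, μs 0, cd) ⟨(hfeas 0).1, (hfeas 0).2.1, hθ k⟩).trans <| by
      simpa [frob] using hB _ ((norm_le_of_mem_transportPolytope (hθ k).1).trans (by linarith))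
  have hcs : Tendsto cs atTop (𝓝 cd) :=
    tendsto_of_frob_sub_tendsto_zero <| tendsto_zero_of_add_one_div_mul_le hγpos hγ0
      (fun k => frob_self_nonneg _) (fun k => hm ⟨_, mem_closedBall_zero_iff.2 (hbound k), rfl⟩)
      hpenalty
  obtain ⟨p, -, φ, hφ, hp⟩ := tendsto_subseq_of_bounded (Metric.isBounded_closedBall (x := 0))
    fun k => mem_closedBall_zero_iff.2 (hbound k)
  have hπ := (continuous_fst.tendsto p).comp hp
  have hμ := (continuous_snd.tendsto p).comp hp
  have hc := hcs.comp hφ.tendsto_atTop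
  have hH := solvesH_of_tendsto_solvesHreg (fun k => (hfeas (φ k)).2.2)
    (hγ0.comp hφ.tendsto_atTop) hμ hc hπ
  exact ⟨φ, p.1, p.2, hφ, hπ.prodMk_nhds (hμ.prodMk_nhds hc),
    nonneg_left_of_mem_transportPolytope hH.1,
    sum_left_eq_sum_right_of_mem_transportPolytope hH.1, hH⟩

/-- Solutions of the regularized bilevel problems have a cluster point of the form
(π̄, μ̄1, c_d), and (π̄, μ̄1) is feasible for the non-regularized bilevel problem. -/
theorem regularized_solutions_cluster_point_feasible (n1 n2 : ℕ) (hn1 : 0 < n1) (hn2 : 0 < n2)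
    (J : (Fin n1 → Fin n2 → ℝ) × (Fin n1 → ℝ) → ℝ)
    (hJ : LowerSemicontinuous J) (hJbdd : BddOnBddSets J)
    (μ2d : Fin n2 → ℝ) (hμ2d : ∀ j, 0 ≤ μ2d j) (cd : Fin n1 → Fin n2 → ℝ)
    (γs : ℕ → ℝ) (hγpos : ∀ k, 0 < γs k) (hγ0 : Tendsto γs atTop (𝓝 0))
    (πs : ℕ → Fin n1 → Fin n2 → ℝ) (μs : ℕ → Fin n1 → ℝ) (cs : ℕ → Fin n1 → Fin n2 → ℝ)
    (hfeas : ∀ k, (πs k, μs k, cs k) ∈ regBilevelFeas (γs k) μ2d)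
    (hmin : ∀ k, ∀ q ∈ regBilevelFeas (n1 := n1) (γs k) μ2d,
      J (πs k, μs k) + 1 / (2 * γs k) * frob (cs k - cd) (cs k - cd) ≤
        J (q.1, q.2.1) + 1 / (2 * γs k) * frob (q.2.2 - cd) (q.2.2 - cd)) :
    ∃ (φ : ℕ → ℕ) (πb : Fin n1 → Fin n2 → ℝ) (μb : Fin n1 → ℝ),
      StrictMono φ ∧
      Tendsto (fun k => (πs (φ k), μs (φ k), cs (φ k))) atTop (𝓝 (πb, μb, cd)) ∧
      (∀ i, 0 ≤ μb i) ∧ ((∑ i, μb i) = ∑ j, μ2d j) ∧ SolvesH μb μ2d cd πb :=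
  regularized_solutions_cluster_point_feasible_general n1 n2 J hJ hJbdd μ2d cd γs hγpos hγ0 πs μs cs
    hfeas hmin
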